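/- arXiv:2004.07223 — 6 statements merged into one kernel-verified Lean document; each statement's English description precedes it below -/
import Mathlib

section
/- For ε > 0, the function KL(ε) := ε/(e^ε − 1) − 1 − log(ε/(e^ε − 1)) satisfies 0 ≤ KL(ε) ≤ ε²/8. (Equivalently, the mean of the privacy loss of an ε-bounded-range mechanism is at most ε²/8 plus a nonpositive correction, i.e., ξ := KL(ε) − ε²/8 ≤ 0.) -/
/-!
Put `t = ε / (exp ε - 1)`, so that the quantity is `t - 1 - log t`, which is nonnegative since
`log t ≤ t - 1`. For the upper bound, `t ≤ 1 - ε/2 + ε²/12` and `-log t ≤ ε/2 + ε²/24`, and the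
two error terms add up to `ε²/8`. With `u = ε/2` and `exp ε - 1 = 2 exp u sinh u`, the first
bound is `u cosh u ≤ (1 + u²/3) sinh u` (a monotonicity argument), and the second is
`sinh u ≤ u exp (u²/6)`, a termwise comparison of power series since `6ⁿ n! ≤ (2n+1)!`.
-/

open Real

open Nat in
lemma Nat.six_pow_mul_factorial_le_factorial_two_mul_add_one (n : ℕ) :
    6 ^ n * n ! ≤ (2 * n + 1)! := by
  induction n with
  | zero => simp
  | succ n ih =>
    calc 6 ^ (n + 1) * (n + 1)! = 6 * (n + 1) * (6 ^ n * n !) := by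
          rw [pow_succ, Nat.factorial_succ]; ring
      _ ≤ (2 * n + 3) * (2 * n + 2) * (2 * n + 1)! := Nat.mul_le_mul (by nlinarith) ih
      _ = (2 * (n + 1) + 1)! := by
          rw [show 2 * (n + 1) + 1 = (2 * n + 1 + 1) + 1 by ring,
            Nat.factorial_succ (2 * n + 1 + 1), Nat.factorial_succ (2 * n + 1)]; ring

lemma Monotone.mul_apply_nonneg {f : ℝ → ℝ} (hf : Monotone f) (h0 : f 0 = 0) (x : ℝ) :
    0 ≤ x * f x := by
  rcases le_total 0 x with hx | hx
  · exact mul_nonneg hx (h0 ▸ hf hx)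
  · exact mul_nonneg_of_nonpos_of_nonpos hx (h0 ▸ hf hx)

namespace Real

open Nat in
lemma sinh_le_mul_exp_sq_div_six {x : ℝ} (hx : 0 ≤ x) : sinh x ≤ x * exp (x ^ 2 / 6) := by
  rw [exp_eq_exp_ℝ]
  refine hasSum_le (fun n ↦ ?_) x.hasSum_sinh
    ((NormedSpace.expSeries_div_hasSum_exp (x ^ 2 / 6)).mul_left x)
  rw [show x * ((x ^ 2 / 6) ^ n / n !) = x ^ (2 * n + 1) / (6 ^ n * n ! : ℕ) by
    push_cast; rw [div_pow, ← pow_mul]; ring]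
  gcongr
  exact Nat.six_pow_mul_factorial_le_factorial_two_mul_add_one n

lemma monotone_mul_cosh_sub_sinh : Monotone fun u : ℝ ↦ u * cosh u - sinh u := by
  refine monotone_of_hasDerivAt_nonneg (f' := fun u ↦ u * sinh u) (fun u ↦ ?_)
    (sinh_strictMono.monotone.mul_apply_nonneg sinh_zero)
  exact (((hasDerivAt_id' u).mul (hasDerivAt_cosh u)).sub (hasDerivAt_sinh u)).congr_deriv
    (by ring)

lemma monotone_one_add_sq_div_three_mul_sinh_sub_mul_cosh :
    Monotone fun u : ℝ ↦ (1 + u ^ 2 / 3) * sinh u - u * cosh u := by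
  refine monotone_of_hasDerivAt_nonneg (f' := fun u ↦ u * (u * cosh u - sinh u) / 3)
    (fun u ↦ ?_) (fun u ↦ ?_)
  · have hsq : HasDerivAt (fun u : ℝ ↦ 1 + u ^ 2 / 3) (2 * u / 3) u := by
      simpa using ((hasDerivAt_pow 2 u).div_const 3).const_add 1
    exact ((hsq.mul (hasDerivAt_sinh u)).sub
      ((hasDerivAt_id' u).mul (hasDerivAt_cosh u))).congr_deriv (by ring)
  · have := monotone_mul_cosh_sub_sinh.mul_apply_nonneg (by simp) u
    simp only [Pi.zero_apply]; positivity

lemma exp_two_mul_sub_one (x : ℝ) : exp (2 * x) - 1 = 2 * exp x * sinh x := by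
  have h : exp x * exp (-x) = 1 := by rw [← exp_add]; simp
  rw [sinh_eq, two_mul, exp_add]
  linear_combination h

lemma exp_sub_one_le_mul_exp {x : ℝ} (hx : 0 ≤ x) :
    exp x - 1 ≤ x * exp (x / 2 + x ^ 2 / 24) := by
  calc exp x - 1 = 2 * exp (x / 2) * sinh (x / 2) := by
        rw [← exp_two_mul_sub_one, mul_div_cancel₀ x two_ne_zero]
    _ ≤ 2 * exp (x / 2) * (x / 2 * exp ((x / 2) ^ 2 / 6)) := by
        gcongr; exact sinh_le_mul_exp_sq_div_six (by positivity)
    _ = x * exp (x / 2 + x ^ 2 / 24) := by rw [exp_add]; ring_nf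

lemma self_le_mul_exp_sub_one {x : ℝ} (hx : 0 ≤ x) :
    x ≤ (1 - x / 2 + x ^ 2 / 12) * (exp x - 1) := by
  set u := x / 2 with hu
  have hxu : x = 2 * u := by rw [hu]; ring
  have key : u * cosh u ≤ (1 + u ^ 2 / 3) * sinh u := by
    simpa using monotone_one_add_sq_div_three_mul_sinh_sub_mul_cosh (show 0 ≤ u by positivity)
  calc x = 2 * (u * (cosh u - sinh u)) * exp u := by
        rw [cosh_sub_sinh, hxu, mul_assoc, mul_assoc, ← exp_add]; simp
    _ ≤ 2 * ((1 + u ^ 2 / 3) * sinh u - u * sinh u) * exp u := by gcongr; linarith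
    _ = (1 - x / 2 + x ^ 2 / 12) * (exp x - 1) := by
        rw [hxu, exp_two_mul_sub_one]; ring

end Real

theorem stmt_5 (ε : ℝ) (hε : 0 < ε) :
    0 ≤ ε / (exp ε - 1) - 1 - log (ε / (exp ε - 1)) ∧
    ε / (exp ε - 1) - 1 - log (ε / (exp ε - 1)) ≤ ε ^ 2 / 8 := by
  have hE : 0 < exp ε - 1 := by linarith [add_one_lt_exp hε.ne']
  have ht : 0 < ε / (exp ε - 1) := div_pos hε hE
  refine ⟨by linarith [log_le_sub_one_of_pos ht], ?_⟩
  have hlin : ε / (exp ε - 1) ≤ 1 - ε / 2 + ε ^ 2 / 12 :=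
    (div_le_iff₀ hE).2 (self_le_mul_exp_sub_one hε.le)
  have hlog : -(ε / 2 + ε ^ 2 / 24) ≤ log (ε / (exp ε - 1)) := by
    rw [le_log_iff_exp_le ht, le_div_iff₀ hE, exp_neg, inv_mul_le_iff₀ (exp_pos _), mul_comm]
    exact exp_sub_one_le_mul_exp hε.le
  linarith
end

section
/- Fix ε > 0, ε_g ∈ ℝ, integers k ≥ m ≥ 0, and ℓ with 0 ≤ ℓ ≤ k + m. With q_t := (1 − e^{t−ε})/(1 − e^{−ε}), k' := k − m, α_{i,j} := C(k',i)·C(m,j)·q_{2ε,ε}^{m−j}(1 − q_{2ε,ε})^j (and α_{i,j} = 0 outside the valid index ranges), define F_ℓ(t) := ∑_{n=0}^{ℓ} (1 − e^{ε_g − ε(m−n) − t k'}) · ∑_{i+2j=n} α_{i,j} q_t^{k'−i} (1 − q_t)^i. Then the derivative of F_ℓ with respect to t ∈ (0, ε) equals (1/(1 − e^{−ε})) · (e^{ε_g − ε(m−ℓ) − t k'} − e^{t−ε}) · ∑_{i+2j=ℓ} α_{i,j} (k' − i) q_t^{k'−i−1} (1 − q_t)^i. -/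
open Real

/-
Write `P_n(x, y) = ∑_{i+2j=n} α_{i,j} x^(k'-i) y^i` (`levelForm`), so that the inner sum of
`F_ℓ` is `P_n(q_t, 1 - q_t)`. The form `P_n` is homogeneous of degree `k'`, so Euler's identity
gives `k' P_n = x ∂ₓP_n + y ∂ᵧP_n`; and `(i+1) C(k', i+1) = (k'-i) C(k', i)` gives
`∂ᵧP_{n+1} = ∂ₓP_n`. Since `q_t + e^(t-ε)/(1-e^(-ε)) = 1/(1-e^(-ε))`, these turn the derivative
of the `n`-th summand into `g_n - g_{n-1}` with
`g_n = (e^(ε_g-ε(m-n)-tk') - e^(t-ε)) ∂ₓP_n / (1-e^(-ε))`, and the sum over `n ≤ ℓ` telescopes.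
-/

noncomputable def qT (ε t : ℝ) : ℝ := (1 - exp (t - ε)) / (1 - exp (-ε))

noncomputable def qEE (ε : ℝ) : ℝ := (1 - exp (-ε)) / (1 - exp (-2 * ε))

noncomputable def alphaCoef (k' m : ℕ) (ε : ℝ) (i j : ℕ) : ℝ :=
  if i ≤ k' ∧ j ≤ m then
    (k'.choose i : ℝ) * (m.choose j : ℝ) * qEE ε ^ (m - j) * (1 - qEE ε) ^ j
  else 0

noncomputable def Fell (k' m : ℕ) (ε εg : ℝ) (ℓ : ℕ) (t : ℝ) : ℝ :=
  ∑ n ∈ Finset.range (ℓ + 1),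
    (1 - exp (εg - ε * ((m : ℝ) - (n : ℝ)) - t * (k' : ℝ))) *
      ∑ p ∈ Finset.range (k' + 1) ×ˢ Finset.range (m + 1),
        if p.1 + 2 * p.2 = n then
          alphaCoef k' m ε p.1 p.2 * qT ε t ^ (k' - p.1) * (1 - qT ε t) ^ p.1
        else 0

open Finset

lemma natCast_mul_pow_eq_mul {R : Type*} [CommSemiring R] (a : ℕ) (x : R) :
    (a : R) * x ^ a = x * ((a : R) * x ^ (a - 1)) := by
  rcases Nat.eq_zero_or_pos a with rfl | ha
  · simp
  · rw [← mul_pow_sub_one ha.ne' x]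
    ring

lemma alphaCoef_succ_mul {k' m : ℕ} {i : ℕ} (ε : ℝ) (j : ℕ) (hi : i < k') :
    alphaCoef k' m ε (i + 1) j * ((i : ℝ) + 1) = alphaCoef k' m ε i j * ((k' : ℝ) - i) := by
  have hchoose : (k'.choose (i + 1) : ℝ) * ((i : ℝ) + 1) = k'.choose i * ((k' : ℝ) - i) := by
    rw [← Nat.cast_sub hi.le]
    exact_mod_cast Nat.choose_succ_right_eq k' i
  unfold alphaCoef
  by_cases hj : j ≤ m
  · rw [if_pos ⟨hi, hj⟩, if_pos ⟨hi.le, hj⟩]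
    linear_combination ((m.choose j : ℝ) * qEE ε ^ (m - j) * (1 - qEE ε) ^ j) * hchoose
  · simp [hj]

section LevelForm

variable (k' m : ℕ) (ε : ℝ)

noncomputable def levelForm (n : ℕ) (x y : ℝ) : ℝ :=
  ∑ p ∈ range (k' + 1) ×ˢ range (m + 1),
    if p.1 + 2 * p.2 = n then alphaCoef k' m ε p.1 p.2 * x ^ (k' - p.1) * y ^ p.1 else 0

noncomputable def levelFormDX (n : ℕ) (x y : ℝ) : ℝ :=
  ∑ p ∈ range (k' + 1) ×ˢ range (m + 1),
    if p.1 + 2 * p.2 = n then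
      alphaCoef k' m ε p.1 p.2 * ((k' : ℝ) - p.1) * x ^ (k' - p.1 - 1) * y ^ p.1
    else 0

noncomputable def levelFormDY (n : ℕ) (x y : ℝ) : ℝ :=
  ∑ p ∈ range (k' + 1) ×ˢ range (m + 1),
    if p.1 + 2 * p.2 = n then
      alphaCoef k' m ε p.1 p.2 * (p.1 : ℝ) * x ^ (k' - p.1) * y ^ (p.1 - 1)
    else 0

lemma natCast_mul_levelForm (n : ℕ) (x y : ℝ) :
    (k' : ℝ) * levelForm k' m ε n x y =
      x * levelFormDX k' m ε n x y + y * levelFormDY k' m ε n x y := by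
  simp only [levelForm, levelFormDX, levelFormDY, mul_sum, ← sum_add_distrib]
  refine sum_congr rfl fun p hp => ?_
  have hp1 : p.1 ≤ k' := Nat.lt_succ_iff.mp (mem_range.mp (mem_product.mp hp).1)
  split_ifs
  · have hx := natCast_mul_pow_eq_mul (k' - p.1) x
    have hy := natCast_mul_pow_eq_mul p.1 y
    rw [Nat.cast_sub hp1] at hx
    linear_combination (alphaCoef k' m ε p.1 p.2 * y ^ p.1) * hx
      + (alphaCoef k' m ε p.1 p.2 * x ^ (k' - p.1)) * hy
  · simp

lemma hasDerivAt_levelForm_one_sub (n : ℕ) (q : ℝ) :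
    HasDerivAt (fun q => levelForm k' m ε n q (1 - q))
      (levelFormDX k' m ε n q (1 - q) - levelFormDY k' m ε n q (1 - q)) q := by
  simp only [levelForm, levelFormDX, levelFormDY, ← sum_sub_distrib]
  refine HasDerivAt.fun_sum fun p hp => ?_
  have hp1 : p.1 ≤ k' := Nat.lt_succ_iff.mp (mem_range.mp (mem_product.mp hp).1)
  split_ifs
  · have h := ((hasDerivAt_pow (k' - p.1) q).const_mul (alphaCoef k' m ε p.1 p.2)).fun_mul
      (((hasDerivAt_id' q).const_sub 1).fun_pow p.1)
    refine h.congr_deriv ?_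
    rw [Nat.cast_sub hp1]
    ring
  · simp only [sub_zero]
    exact hasDerivAt_const q 0

lemma levelFormDY_zero (x y : ℝ) : levelFormDY k' m ε 0 x y = 0 := by
  refine sum_eq_zero fun p _ => ?_
  split_ifs with h
  · simp [show p.1 = 0 by omega]
  · rfl

lemma levelFormDY_succ (n : ℕ) (x y : ℝ) :
    levelFormDY k' m ε (n + 1) x y = levelFormDX k' m ε n x y := by
  rw [levelFormDY, levelFormDX, sum_product, sum_product]
  conv_lhs => rw [sum_range_succ']
  conv_rhs => rw [sum_range_succ]
  simp only [Nat.cast_zero, mul_zero, zero_mul, ite_self, sum_const_zero, add_zero, Nat.cast_add,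
    Nat.cast_one, Nat.add_sub_cancel, sub_self]
  refine sum_congr rfl fun i hi => sum_congr rfl fun j _ => ?_
  have hi : i < k' := mem_range.mp hi
  simp only [Nat.add_right_comm i 1, Nat.add_right_cancel_iff, Nat.sub_add_eq]
  split_ifs
  · rw [alphaCoef_succ_mul ε j hi]
  · rfl

end LevelForm

lemma hasDerivAt_qT (ε t : ℝ) : HasDerivAt (qT ε) (-(exp (t - ε) / (1 - exp (-ε)))) t := by
  have h := (((hasDerivAt_id t).sub_const ε).exp.const_sub 1).div_const (1 - exp (-ε))
  exact (by simpa [neg_div] using h :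
    HasDerivAt (fun s => (1 - exp (s - ε)) / (1 - exp (-ε))) _ t)

lemma sum_range_succ_mul_sub_shift {R : Type*} [CommRing R] {E X Y : ℕ → R} {a c : R}
    (hY_zero : Y 0 = 0) (hY_succ : ∀ n, Y (n + 1) = X n) (hE : ∀ n, E (n + 1) * a = E n)
    (ℓ : ℕ) :
    ∑ n ∈ range (ℓ + 1), (E n * (X n - a * Y n) - c * (X n - Y n)) = (E ℓ - c) * X ℓ := by
  induction ℓ with
  | zero =>
    rw [sum_range_one, hY_zero]
    ring
  | succ ℓ ih =>
    rw [sum_range_succ, ih, hY_succ, ← hE]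
    ring

section Fell

variable (k' m : ℕ) (ε εg : ℝ)

noncomputable def levelTerm (n : ℕ) (t : ℝ) : ℝ :=
  (1 - exp (εg - ε * ((m : ℝ) - n) - t * k')) * levelForm k' m ε n (qT ε t) (1 - qT ε t)

lemma Fell_eq_sum_levelTerm (ℓ : ℕ) :
    Fell k' m ε εg ℓ = fun t => ∑ n ∈ range (ℓ + 1), levelTerm k' m ε εg n t :=
  rfl

lemma hasDerivAt_levelTerm (hε : ε ≠ 0) (n : ℕ) (t : ℝ) :
    HasDerivAt (levelTerm k' m ε εg n)
      ((exp (εg - ε * ((m : ℝ) - n) - t * k') *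
          (levelFormDX k' m ε n (qT ε t) (1 - qT ε t) -
            exp (-ε) * levelFormDY k' m ε n (qT ε t) (1 - qT ε t)) -
        exp (t - ε) *
          (levelFormDX k' m ε n (qT ε t) (1 - qT ε t) -
            levelFormDY k' m ε n (qT ε t) (1 - qT ε t))) / (1 - exp (-ε))) t := by
  have hB : 1 - exp (-ε) ≠ 0 :=
    sub_ne_zero.mpr fun h => hε (neg_eq_zero.mp ((exp_eq_one_iff _).mp h.symm))
  have hweight : HasDerivAt (fun s => 1 - exp (εg - ε * ((m : ℝ) - n) - s * k'))
      (k' * exp (εg - ε * ((m : ℝ) - n) - t * k')) t := by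
    have h := (((hasDerivAt_id' t).mul_const (k' : ℝ)).const_sub
      (εg - ε * ((m : ℝ) - n))).exp.const_sub 1
    exact h.congr_deriv (by ring)
  have hform := (hasDerivAt_levelForm_one_sub k' m ε n (qT ε t)).comp t (hasDerivAt_qT ε t)
  have heuler := natCast_mul_levelForm k' m ε n (qT ε t) (1 - qT ε t)
  have hq : qT ε t * (1 - exp (-ε)) = 1 - exp (t - ε) := div_mul_cancel₀ _ hB
  refine (hweight.mul hform).congr_deriv ?_
  set X := levelFormDX k' m ε n (qT ε t) (1 - qT ε t)
  set Y := levelFormDY k' m ε n (qT ε t) (1 - qT ε t)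
  set E := exp (εg - ε * ((m : ℝ) - n) - t * k')
  have hdiv : exp (t - ε) / (1 - exp (-ε)) * (1 - exp (-ε)) = exp (t - ε) :=
    div_mul_cancel₀ _ hB
  rw [eq_div_iff hB, Function.comp_apply]
  linear_combination (E * (1 - exp (-ε))) * heuler + (E * (X - Y)) * hq
    - ((1 - E) * (X - Y)) * hdiv

lemma hasDerivAt_Fell (hε : ε ≠ 0) (ℓ : ℕ) (t : ℝ) :
    HasDerivAt (Fell k' m ε εg ℓ)
      ((1 / (1 - exp (-ε))) * (exp (εg - ε * ((m : ℝ) - ℓ) - t * k') - exp (t - ε)) *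
        levelFormDX k' m ε ℓ (qT ε t) (1 - qT ε t)) t := by
  have hweight (n : ℕ) : exp (εg - ε * ((m : ℝ) - (n + 1 : ℕ)) - t * k') * exp (-ε) =
      exp (εg - ε * ((m : ℝ) - n) - t * k') := by
    rw [← exp_add]
    push_cast
    ring_nf
  have h := HasDerivAt.fun_sum (u := range (ℓ + 1)) fun n _ =>
    hasDerivAt_levelTerm k' m ε εg hε n t
  rw [← sum_div, sum_range_succ_mul_sub_shift (levelFormDY_zero k' m ε _ _)
    (levelFormDY_succ k' m ε · _ _) hweight] at h
  rw [Fell_eq_sum_levelTerm]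
  exact h.congr_deriv (by ring)

end Fell

theorem stmt_8_general (ε εg : ℝ) (hε : 0 < ε) (k m : ℕ)
    (ℓ : ℕ) (t : ℝ) :
    HasDerivAt (Fell (k - m) m ε εg ℓ)
      ((1 / (1 - exp (-ε))) *
        (exp (εg - ε * ((m : ℝ) - (ℓ : ℝ)) - t * ((k - m : ℕ) : ℝ)) - exp (t - ε)) *
        ∑ p ∈ Finset.range (k - m + 1) ×ˢ Finset.range (m + 1),
          if p.1 + 2 * p.2 = ℓ then
            alphaCoef (k - m) m ε p.1 p.2 * (((k - m : ℕ) : ℝ) - (p.1 : ℝ)) *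
              qT ε t ^ (k - m - p.1 - 1) * (1 - qT ε t) ^ p.1
          else 0) t :=
  hasDerivAt_Fell (k - m) m ε εg hε.ne' ℓ t

theorem stmt_8 (ε εg : ℝ) (hε : 0 < ε) (k m : ℕ) (hmk : m ≤ k)
    (ℓ : ℕ) (hℓ : ℓ ≤ k + m) (t : ℝ) (ht : t ∈ Set.Ioo 0 ε) :
    HasDerivAt (Fell (k - m) m ε εg ℓ)
      ((1 / (1 - exp (-ε))) *
        (exp (εg - ε * ((m : ℝ) - (ℓ : ℝ)) - t * ((k - m : ℕ) : ℝ)) - exp (t - ε)) *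
        ∑ p ∈ Finset.range (k - m + 1) ×ˢ Finset.range (m + 1),
          if p.1 + 2 * p.2 = ℓ then
            alphaCoef (k - m) m ε p.1 p.2 * (((k - m : ℕ) : ℝ) - (p.1 : ℝ)) *
              qT ε t ^ (k - m - p.1 - 1) * (1 - qT ε t) ^ p.1
          else 0) t :=
  stmt_8_general ε εg hε k m ℓ t
end

section
/- Define δ_ℓ(x) recursively by δ_0(x) = max(1 − e^x, 0) and δ_ℓ(x) = q·δ_{ℓ−1}(x − ε) + (1 − q)·δ_{ℓ−1}(x + ε), where q := (1 − e^{−ε})/(1 − e^{−2ε}). Then for every ℓ ≥ 0 there exist nonnegative constants λ_{ℓ,0},…,λ_{ℓ,ℓ} such that δ_ℓ(x) = ∑_{i=0}^{ℓ} λ_{ℓ,i}·max(1 − e^{(2i−ℓ)ε + x}, 0) for all x ∈ ℝ. -/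
open Real

theorem stmt_10 (ε : ℝ) (hε : 0 < ε) (del : ℕ → ℝ → ℝ)
    (h0 : ∀ x, del 0 x = max (1 - exp x) 0)
    (hrec : ∀ ℓ x, del (ℓ + 1) x =
      (1 - exp (-ε)) / (1 - exp (-2 * ε)) * del ℓ (x - ε) +
        (1 - (1 - exp (-ε)) / (1 - exp (-2 * ε))) * del ℓ (x + ε)) :
    ∀ ℓ : ℕ, ∃ lam : ℕ → ℝ, (∀ i ≤ ℓ, 0 ≤ lam i) ∧
      ∀ x : ℝ, del ℓ x =
        ∑ i ∈ Finset.range (ℓ + 1),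
          lam i * max (1 - exp ((2 * (i : ℝ) - (ℓ : ℝ)) * ε + x)) 0 := by
  set q : ℝ := (1 - exp (-ε)) / (1 - exp (-2 * ε)) with hq
  have hd : 0 < 1 - exp (-2 * ε) := by
    have : exp (-2 * ε) < 1 := exp_lt_one_iff.mpr (by linarith)
    linarith
  have hq0 : 0 ≤ q := by
    apply div_nonneg _ hd.le
    have : exp (-ε) < 1 := exp_lt_one_iff.mpr (by linarith)
    linarith
  have hq1 : q ≤ 1 := by
    rw [hq, div_le_one hd]
    have : exp (-2 * ε) ≤ exp (-ε) := exp_le_exp.mpr (by linarith)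
    linarith
  intro ℓ
  induction ℓ with
  | zero =>
    refine ⟨fun _ => 1, fun i _ => zero_le_one, fun x => ?_⟩
    simp [h0 x]
  | succ n ih =>
    obtain ⟨lam, hlam0, hlam⟩ := ih
    refine ⟨fun i => q * (if i = n + 1 then 0 else lam i)
        + (1 - q) * (if i = 0 then 0 else lam (i - 1)), fun i hi => ?_, fun x => ?_⟩
    · have h1 : 0 ≤ (if i = n + 1 then 0 else lam i) := by
        split
        · exact le_refl 0
        · exact hlam0 i (by omega)
      have h2 : 0 ≤ (if i = 0 then 0 else lam (i - 1)) := by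
        split
        · exact le_refl 0
        · exact hlam0 (i - 1) (by omega)
      have ha := mul_nonneg hq0 h1
      have hb := mul_nonneg (by linarith : (0:ℝ) ≤ 1 - q) h2
      dsimp only
      linarith
    · rw [hrec n x, hlam (x - ε), hlam (x + ε)]
      rw [Finset.mul_sum, Finset.mul_sum]
      rw [show ∀ s₁ s₂ : ℝ, s₁ + s₂ = s₁ + s₂ from fun _ _ => rfl]
      have e1 : ∑ i ∈ Finset.range (n + 2),
            q * (if i = n + 1 then 0 else lam i)
              * max (1 - exp ((2 * (i : ℝ) - ((n : ℝ) + 1)) * ε + x)) 0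
          = ∑ i ∈ Finset.range (n + 1),
          q * (lam i * max (1 - exp ((2 * (i : ℝ) - (n : ℝ)) * ε + (x - ε))) 0) := by
        rw [Finset.sum_range_succ]
        simp only [if_true, eq_self_iff_true, mul_zero, zero_mul, add_zero]
        apply Finset.sum_congr rfl
        intro i hi
        have hi' : i ≠ n + 1 := by
          have := Finset.mem_range.mp hi; omega
        rw [if_neg hi']
        ring_nf
      have e2 : ∑ i ∈ Finset.range (n + 2),
            (1 - q) * (if i = 0 then 0 else lam (i - 1))
              * max (1 - exp ((2 * (i : ℝ) - ((n : ℝ) + 1)) * ε + x)) 0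
          = ∑ i ∈ Finset.range (n + 1),
          (1 - q) * (lam i * max (1 - exp ((2 * (i : ℝ) - (n : ℝ)) * ε + (x + ε))) 0) := by
        rw [Finset.sum_range_succ']
        simp only [if_true, Nat.succ_ne_zero, eq_self_iff_true, mul_zero, zero_mul, add_zero]
        apply Finset.sum_congr rfl
        intro i hi
        simp only [if_false, Nat.add_sub_cancel]
        push_cast
        ring_nf
      rw [← e1, ← e2, ← Finset.sum_add_distrib]
      push_cast
      apply Finset.sum_congr rfl
      intro i hi
      ring
end

section
/- For ε > 0 and 0 ≤ ε_g < ε with ε/2 < ε_g, define x(t) := q_{2ε,ε}(q_{ε,t}·q_{ε,(ε_g−t)/2}²·(1−e^{−ε}) + (1−q_{ε,t})·q_{ε,(ε_g+ε−t)/2}²·(1−e^{−ε})) on [0, ε_g). Then x is maximized at t = ε/2; that is, sup_{t∈[0,ε_g)} x(t) = x(ε/2). -/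
open Real

lemma key_ineq (u s b G : ℝ) (hu : 0 < u) (hs : 0 < s) (hs1 : s < 1) (hG : 0 < G)
    (hb : b = s ^ 2) :
    (1 - u ^ 2 * b ^ 2) * (1 - G * b ^ 2 / u) ^ 2 +
      (u ^ 2 * b ^ 2 - b ^ 2) * (1 - G * b / u) ^ 2 ≤
    (1 - b) * (1 - G * s * b ^ 2) ^ 2 + (b - b ^ 2) * (1 - G * s * b) ^ 2 := by
  subst hb
  have hu' : u ≠ 0 := ne_of_gt hu
  have hdiff :
      ((1 - s ^ 2) * (1 - G * s * (s ^ 2) ^ 2) ^ 2 +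
        (s ^ 2 - (s ^ 2) ^ 2) * (1 - G * s * s ^ 2) ^ 2) -
      ((1 - u ^ 2 * (s ^ 2) ^ 2) * (1 - G * (s ^ 2) ^ 2 / u) ^ 2 +
        (u ^ 2 * (s ^ 2) ^ 2 - (s ^ 2) ^ 2) * (1 - G * s ^ 2 / u) ^ 2)
      = 2 * G * s ^ 4 * (1 - s ^ 2) * (s * u - 1) ^ 2 / u := by
    field_simp
    ring
  have h1 : 0 ≤ 2 * G * s ^ 4 * (1 - s ^ 2) * (s * u - 1) ^ 2 / u := by
    apply div_nonneg _ hu.le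
    have : 0 ≤ 1 - s ^ 2 := by nlinarith
    positivity
  linarith [hdiff ▸ h1]

theorem stmt_13 (ε εg : ℝ) (hε : 0 < ε) (hεg0 : 0 ≤ εg) (hεgε : εg < ε)
    (hhalf : ε / 2 < εg) :
    IsMaxOn
      (fun t : ℝ => qEE ε *
        (qT ε t * qT ε ((εg - t) / 2) ^ 2 * (1 - exp (-ε)) +
          (1 - qT ε t) * qT ε ((εg + ε - t) / 2) ^ 2 * (1 - exp (-ε))))
      (Set.Ico 0 εg) (ε / 2) := by
  have hc : (0:ℝ) < 1 - exp (-ε) := by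
    have : exp (-ε) < 1 := by
      calc exp (-ε) < exp 0 := exp_lt_exp.mpr (by linarith)
        _ = 1 := exp_zero
    linarith
  have hd : (0:ℝ) < 1 - exp (-2 * ε) := by
    have : exp (-2 * ε) < 1 := by
      calc exp (-2 * ε) < exp 0 := exp_lt_exp.mpr (by linarith)
        _ = 1 := exp_zero
    linarith
  have hc' : (1:ℝ) - exp (-ε) ≠ 0 := ne_of_gt hc
  have hd' : (1:ℝ) - exp (-2 * ε) ≠ 0 := ne_of_gt hd
  have hrep : ∀ r : ℝ, qEE ε *
      (qT ε r * qT ε ((εg - r) / 2) ^ 2 * (1 - exp (-ε)) +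
        (1 - qT ε r) * qT ε ((εg + ε - r) / 2) ^ 2 * (1 - exp (-ε))) =
      ((1 - exp (r - ε)) * (1 - exp ((εg - r) / 2 - ε)) ^ 2 +
        (exp (r - ε) - exp (-ε)) * (1 - exp ((εg + ε - r) / 2 - ε)) ^ 2) /
        ((1 - exp (-ε)) * (1 - exp (-2 * ε))) := by
    intro r
    unfold qT qEE
    set a := exp (-ε) with ha
    set a2 := exp (-2 * ε) with ha2
    field_simp
    ring
  intro t ht
  simp only [Set.mem_setOf_eq, hrep]
  rw [div_le_div_iff₀ (by positivity) (by positivity)]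
  have hkey :
      (1 - exp (t - ε)) * (1 - exp ((εg - t) / 2 - ε)) ^ 2 +
        (exp (t - ε) - exp (-ε)) * (1 - exp ((εg + ε - t) / 2 - ε)) ^ 2 ≤
      (1 - exp (ε / 2 - ε)) * (1 - exp ((εg - ε / 2) / 2 - ε)) ^ 2 +
        (exp (ε / 2 - ε) - exp (-ε)) * (1 - exp ((εg + ε - ε / 2) / 2 - ε)) ^ 2 := by
    have e1 : exp (t - ε) = exp (t / 2) ^ 2 * exp (-(ε / 2)) ^ 2 := by
      rw [sq, sq, ← exp_add, ← exp_add, ← exp_add]; congr 1; ring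
    have e2 : exp ((εg - t) / 2 - ε) = exp (εg / 2) * exp (-(ε / 2)) ^ 2 / exp (t / 2) := by
      rw [eq_div_iff (exp_ne_zero _), sq, ← exp_add, ← exp_add, ← exp_add]; congr 1; ring
    have e3 : exp ((εg + ε - t) / 2 - ε) = exp (εg / 2) * exp (-(ε / 2)) / exp (t / 2) := by
      rw [eq_div_iff (exp_ne_zero _), ← exp_add, ← exp_add]; congr 1; ring
    have e4 : exp (ε / 2 - ε) = exp (-(ε / 2)) := by congr 1; ring
    have e5 : exp ((εg - ε / 2) / 2 - ε) =
        exp (εg / 2) * exp (-(ε / 4)) * exp (-(ε / 2)) ^ 2 := by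
      rw [sq, ← exp_add, ← exp_add, ← exp_add]; congr 1; ring
    have e6 : exp ((εg + ε - ε / 2) / 2 - ε) =
        exp (εg / 2) * exp (-(ε / 4)) * exp (-(ε / 2)) := by
      rw [← exp_add, ← exp_add]; congr 1; ring
    have e7 : exp (-ε) = exp (-(ε / 2)) ^ 2 := by
      rw [sq, ← exp_add]; congr 1; ring
    have hb : exp (-(ε / 2)) = exp (-(ε / 4)) ^ 2 := by
      rw [sq, ← exp_add]; congr 1; ring
    rw [e1, e2, e3, e4, e5, e6, e7]
    exact key_ineq (exp (t / 2)) (exp (-(ε / 4))) (exp (-(ε / 2))) (exp (εg / 2))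
      (exp_pos _) (exp_pos _)
      (by calc exp (-(ε / 4)) < exp 0 := exp_lt_exp.mpr (by linarith)
            _ = 1 := exp_zero)
      (exp_pos _) hb
  nlinarith [hkey, mul_pos hc hd]
end

section
/- For ε > 0, ε_g ∈ ℝ, and any t ∈ [0, ε], the inequality q_{ε,(ε_g−t)/2}²·(1 − e^{−ε}) ≥ 1 − e^{ε_g − ε − t} holds whenever (ε_g − t)/2 ∈ [0, ε], with equality if and only if t = ε_g. Equivalently, (1 − e^{(ε_g−t)/2 − ε})²/(1 − e^{−ε}) − (1 − e^{ε_g − ε − t}) = (1 − e^{(ε_g−t)/2})²·e^{−ε}/(1 − e^{−ε}) ≥ 0. -/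
open Real

/-- With `a = exp s` and `b = exp (-ε)` the whole computation is this field identity. -/
lemma sq_one_sub_mul_div_sub {K : Type*} [Field K] {b : K} (hb : b ≠ 1) (a : K) :
    (1 - a * b) ^ 2 / (1 - b) - (1 - a ^ 2 * b) = (1 - a) ^ 2 * b / (1 - b) := by
  have : 1 - b ≠ 0 := sub_ne_zero.mpr hb.symm
  field_simp
  ring

lemma one_sub_exp_neg_ne_zero {ε : ℝ} (hε : ε ≠ 0) : 1 - exp (-ε) ≠ 0 := by
  rw [sub_ne_zero, ne_comm, Ne, exp_eq_one_iff, neg_eq_zero]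
  exact hε

lemma one_sub_exp_sub_sq_div_sub {ε : ℝ} (hε : ε ≠ 0) (s : ℝ) :
    (1 - exp (s - ε)) ^ 2 / (1 - exp (-ε)) - (1 - exp (2 * s - ε)) =
      (1 - exp s) ^ 2 * exp (-ε) / (1 - exp (-ε)) := by
  have hb : exp (-ε) ≠ 1 := (sub_ne_zero.mp (one_sub_exp_neg_ne_zero hε)).symm
  rw [sub_eq_add_neg s, sub_eq_add_neg (2 * s), two_mul, exp_add, exp_add, exp_add,
    ← sq_one_sub_mul_div_sub hb]
  ring

lemma qT_sq_mul_one_sub_exp {ε : ℝ} (hε : ε ≠ 0) (s : ℝ) :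
    qT ε s ^ 2 * (1 - exp (-ε)) = (1 - exp (s - ε)) ^ 2 / (1 - exp (-ε)) := by
  have := one_sub_exp_neg_ne_zero hε
  unfold qT
  field_simp

lemma one_sub_exp_sq_mul_div_nonneg {ε : ℝ} (hε : 0 < ε) (s : ℝ) :
    0 ≤ (1 - exp s) ^ 2 * exp (-ε) / (1 - exp (-ε)) := by
  have : 0 < 1 - exp (-ε) := sub_pos.mpr (exp_lt_one_iff.mpr (neg_neg_of_pos hε))
  positivity

lemma one_sub_exp_sq_mul_div_eq_zero_iff {ε : ℝ} (hε : ε ≠ 0) (s : ℝ) :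
    (1 - exp s) ^ 2 * exp (-ε) / (1 - exp (-ε)) = 0 ↔ s = 0 := by
  rw [div_eq_zero_iff, or_iff_left (one_sub_exp_neg_ne_zero hε), mul_eq_zero,
    or_iff_left (exp_pos _).ne', sq_eq_zero_iff, sub_eq_zero, eq_comm, exp_eq_one_iff]

theorem stmt_15_general (ε εg t : ℝ) (hε : 0 < ε) :
    (1 - exp (εg - ε - t) ≤ qT ε ((εg - t) / 2) ^ 2 * (1 - exp (-ε))) ∧
    (qT ε ((εg - t) / 2) ^ 2 * (1 - exp (-ε)) = 1 - exp (εg - ε - t) ↔ t = εg) ∧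
    ((1 - exp ((εg - t) / 2 - ε)) ^ 2 / (1 - exp (-ε)) - (1 - exp (εg - ε - t))
      = (1 - exp ((εg - t) / 2)) ^ 2 * exp (-ε) / (1 - exp (-ε))) := by
  set s := (εg - t) / 2
  have h2s : εg - ε - t = 2 * s - ε := by ring
  have hgap := one_sub_exp_sub_sq_div_sub hε.ne' s
  have hq := qT_sq_mul_one_sub_exp hε.ne' s
  have hzero := one_sub_exp_sq_mul_div_eq_zero_iff hε.ne' s
  rw [h2s, hq]
  refine ⟨by linarith [one_sub_exp_sq_mul_div_nonneg hε s], ?_, hgap⟩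
  rw [← sub_eq_zero, hgap, hzero]
  constructor <;> intro h <;> linarith

theorem stmt_15 (ε εg t : ℝ) (hε : 0 < ε) (ht : t ∈ Set.Icc 0 ε)
    (hmid : (εg - t) / 2 ∈ Set.Icc 0 ε) :
    (1 - exp (εg - ε - t) ≤ qT ε ((εg - t) / 2) ^ 2 * (1 - exp (-ε))) ∧
    (qT ε ((εg - t) / 2) ^ 2 * (1 - exp (-ε)) = 1 - exp (εg - ε - t) ↔ t = εg) ∧
    ((1 - exp ((εg - t) / 2 - ε)) ^ 2 / (1 - exp (-ε)) - (1 - exp (εg - ε - t))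
      = (1 - exp ((εg - t) / 2)) ^ 2 * exp (-ε) / (1 - exp (-ε))) :=
  stmt_15_general ε εg t hε
end

section
/- For ε > 0 and t < ε_g ≤ t + ε, sup_{t' ∈ [0,ε]} { q_{ε,t'}·[1 − e^{ε_g − ε − t − t'}]_+ + (1 − q_{ε,t'})·[1 − e^{ε_g − t − t'}]_+ } = max{ q_{ε,(ε_g−t)/2}²·(1 − e^{−ε}), 1 − e^{ε_g − ε − t} } = q_{ε,(ε_g−t)/2}²·(1 − e^{−ε}). -/
/-!
Write `a = ε_g - t` and `D = 1 - e^{-ε}`, so that `q_{ε,s} D = 1 - e^{s-ε}`. For `t' ≤ a` only the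
first hinge is active and the objective times `D` is `(1 - e^{t'-ε})(1 - e^{a-ε-t'})`; for `t' ≥ a`
both are active and the objective times `D` is the constant `D (1 - e^{a-ε})`. Both are products
`(1 - e^p)(1 - e^q)` with `p + q = a - 2ε`, which by AM-GM are at most `(1 - e^{a/2-ε})²`, with
equality at `t' = a/2`; and `(1 - e^{a/2-ε})² = q_{ε,a/2}² D²`. Dividing the `t' ≥ a` bound by `D`
shows that `1 - e^{a-ε}` loses the outer maximum.
-/

open Real

theorem one_sub_exp_mul_one_sub_exp_le (p q : ℝ) :
    (1 - exp p) * (1 - exp q) ≤ (1 - exp ((p + q) / 2)) ^ 2 := by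
  have hp : exp p = exp (p / 2) * exp (p / 2) := by rw [← exp_add]; ring_nf
  have hq : exp q = exp (q / 2) * exp (q / 2) := by rw [← exp_add]; ring_nf
  have hpq : exp ((p + q) / 2) = exp (p / 2) * exp (q / 2) := by rw [← exp_add]; ring_nf
  nlinarith [sq_nonneg (exp (p / 2) - exp (q / 2))]

theorem max_one_sub_exp_zero_of_nonpos {x : ℝ} (hx : x ≤ 0) : max (1 - exp x) 0 = 1 - exp x :=
  max_eq_left (sub_nonneg.mpr (exp_le_one_iff.mpr hx))

theorem max_one_sub_exp_zero_of_nonneg {x : ℝ} (hx : 0 ≤ x) : max (1 - exp x) 0 = 0 :=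
  max_eq_right (sub_nonpos.mpr (one_le_exp hx))

theorem one_sub_exp_neg_pos {ε : ℝ} (hε : 0 < ε) : 0 < 1 - exp (-ε) :=
  sub_pos.mpr (exp_lt_one_iff.mpr (neg_neg_of_pos hε))

theorem qT_mul_one_sub_exp_neg {ε : ℝ} (hε : ε ≠ 0) (s : ℝ) :
    qT ε s * (1 - exp (-ε)) = 1 - exp (s - ε) := by
  have hD : 1 - exp (-ε) ≠ 0 := by
    rw [sub_ne_zero, ne_comm, Ne, exp_eq_one_iff]
    exact neg_ne_zero.mpr hε
  unfold qT
  field_simp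

/-- The objective of the supremum, with `a` standing for `ε_g - t`. -/
noncomputable def hingeMix (ε a t' : ℝ) : ℝ :=
  qT ε t' * max (1 - exp (a - ε - t')) 0 + (1 - qT ε t') * max (1 - exp (a - t')) 0

section hingeMix

variable {ε a t' : ℝ}

theorem hingeMix_mul_of_le (hε : ε ≠ 0) (ht'₀ : 0 ≤ t') (ht'a : t' ≤ a) (haε : a ≤ ε) :
    hingeMix ε a t' * (1 - exp (-ε)) = (1 - exp (t' - ε)) * (1 - exp (a - ε - t')) := by
  rw [hingeMix, max_one_sub_exp_zero_of_nonpos (by linarith),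
    max_one_sub_exp_zero_of_nonneg (by linarith), ← qT_mul_one_sub_exp_neg hε]
  ring

theorem hingeMix_mul_of_ge (hε : 0 < ε) (hat' : a ≤ t') :
    hingeMix ε a t' * (1 - exp (-ε)) = (1 - exp (-ε)) * (1 - exp (a - ε)) := by
  have hq := qT_mul_one_sub_exp_neg hε.ne' t'
  have e₁ : exp (t' - ε) * exp (a - ε - t') = exp (-ε) * exp (a - ε) := by
    rw [← exp_add, ← exp_add]; ring_nf
  have e₂ : exp (t' - ε) * exp (a - t') = exp (a - ε) := by rw [← exp_add]; ring_nf
  have e₃ : exp (-ε) * exp (a - t') = exp (a - ε - t') := by rw [← exp_add]; ring_nf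
  rw [hingeMix, max_one_sub_exp_zero_of_nonpos (by linarith),
    max_one_sub_exp_zero_of_nonpos (by linarith)]
  linear_combination (1 - exp (a - ε - t') - (1 - exp (a - t'))) * hq + e₁ - e₂ + e₃

theorem one_sub_exp_neg_mul_one_sub_exp_le (ε a : ℝ) :
    (1 - exp (-ε)) * (1 - exp (a - ε)) ≤ (1 - exp (a / 2 - ε)) ^ 2 := by
  have h := one_sub_exp_mul_one_sub_exp_le (-ε) (a - ε)
  rwa [show (-ε + (a - ε)) / 2 = a / 2 - ε by ring] at h

theorem sq_qT_half_mul_sq (hε : ε ≠ 0) :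
    qT ε (a / 2) ^ 2 * (1 - exp (-ε)) * (1 - exp (-ε)) = (1 - exp (a / 2 - ε)) ^ 2 := by
  rw [← qT_mul_one_sub_exp_neg hε]
  ring

theorem one_sub_exp_sub_le_sq_qT_half (hε : 0 < ε) :
    1 - exp (a - ε) ≤ qT ε (a / 2) ^ 2 * (1 - exp (-ε)) := by
  refine le_of_mul_le_mul_right ?_ (one_sub_exp_neg_pos hε)
  rw [sq_qT_half_mul_sq hε.ne', mul_comm]
  exact one_sub_exp_neg_mul_one_sub_exp_le ε a

theorem hingeMix_le (hε : 0 < ε) (haε : a ≤ ε) (ht'₀ : 0 ≤ t') :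
    hingeMix ε a t' ≤ qT ε (a / 2) ^ 2 * (1 - exp (-ε)) := by
  refine le_of_mul_le_mul_right ?_ (one_sub_exp_neg_pos hε)
  rw [sq_qT_half_mul_sq hε.ne']
  rcases le_total t' a with ht'a | hat'
  · rw [hingeMix_mul_of_le hε.ne' ht'₀ ht'a haε]
    have h := one_sub_exp_mul_one_sub_exp_le (t' - ε) (a - ε - t')
    rwa [show (t' - ε + (a - ε - t')) / 2 = a / 2 - ε by ring] at h
  · rw [hingeMix_mul_of_ge hε hat']
    exact one_sub_exp_neg_mul_one_sub_exp_le ε a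

theorem hingeMix_half (hε : 0 < ε) (ha₀ : 0 ≤ a) (haε : a ≤ ε) :
    hingeMix ε a (a / 2) = qT ε (a / 2) ^ 2 * (1 - exp (-ε)) := by
  refine mul_right_cancel₀ (one_sub_exp_neg_pos hε).ne' ?_
  rw [sq_qT_half_mul_sq hε.ne', hingeMix_mul_of_le hε.ne' (by linarith) (by linarith) haε]
  ring_nf

theorem isGreatest_hingeMix_image (hε : 0 < ε) (ha₀ : 0 ≤ a) (haε : a ≤ ε) :
    IsGreatest (hingeMix ε a '' Set.Icc 0 ε) (qT ε (a / 2) ^ 2 * (1 - exp (-ε))) := by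
  refine ⟨⟨a / 2, ⟨by linarith, by linarith⟩, hingeMix_half hε ha₀ haε⟩, ?_⟩
  rintro _ ⟨t', ht', rfl⟩
  exact hingeMix_le hε haε ht'.1

end hingeMix

theorem stmt_16_general (ε εg t : ℝ) (hε : 0 < ε) (ht : t < εg) (htε : εg ≤ t + ε) :
    sSup ((fun t' : ℝ =>
        qT ε t' * max (1 - exp (εg - ε - t - t')) 0 +
          (1 - qT ε t') * max (1 - exp (εg - t - t')) 0) '' Set.Icc 0 ε)
      = max (qT ε ((εg - t) / 2) ^ 2 * (1 - exp (-ε))) (1 - exp (εg - ε - t)) ∧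
    max (qT ε ((εg - t) / 2) ^ 2 * (1 - exp (-ε))) (1 - exp (εg - ε - t))
      = qT ε ((εg - t) / 2) ^ 2 * (1 - exp (-ε)) := by
  have hmax : max (qT ε ((εg - t) / 2) ^ 2 * (1 - exp (-ε))) (1 - exp (εg - ε - t))
      = qT ε ((εg - t) / 2) ^ 2 * (1 - exp (-ε)) := by
    refine max_eq_left ?_
    rw [show εg - ε - t = εg - t - ε by ring]
    exact one_sub_exp_sub_le_sq_qT_half hε
  have hobjective : (fun t' : ℝ =>
      qT ε t' * max (1 - exp (εg - ε - t - t')) 0 +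
        (1 - qT ε t') * max (1 - exp (εg - t - t')) 0) = hingeMix ε (εg - t) := by
    funext t'
    rw [hingeMix, show εg - ε - t - t' = εg - t - ε - t' by ring]
  rw [hmax, hobjective]
  exact ⟨(isGreatest_hingeMix_image hε (by linarith) (by linarith)).csSup_eq, rfl⟩

theorem stmt_16 (ε εg t : ℝ) (hε : 0 < ε) (ht : t < εg) (htε : εg ≤ t + ε)
    (hmid : (εg - t) / 2 ∈ Set.Icc 0 ε) :
    sSup ((fun t' : ℝ =>
        qT ε t' * max (1 - exp (εg - ε - t - t')) 0 +
          (1 - qT ε t') * max (1 - exp (εg - t - t')) 0) '' Set.Icc 0 ε)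
      = max (qT ε ((εg - t) / 2) ^ 2 * (1 - exp (-ε))) (1 - exp (εg - ε - t)) ∧
    max (qT ε ((εg - t) / 2) ^ 2 * (1 - exp (-ε))) (1 - exp (εg - ε - t))
      = qT ε ((εg - t) / 2) ^ 2 * (1 - exp (-ε)) :=
  stmt_16_general ε εg t hε ht htε
end
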